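/- Realized formulas are true: for every formula φ with parameters in V_tr(A), if a ⊩ φ then φ° holds, where φ° is obtained by replacing each parameter x by x°. -/

import Mathlib

/-- Lifting of a partial binary application to `Option`. -/
def oap {A : Type} (app : A → A → Option A) (x y : Option A) : Option A :=
  x.bind fun a => y.bind fun b => app a b

/-- A partial combinatory algebra, together with chosen pairing and projection
combinators (which exist in any pca). -/
structure PCA (A : Type) where
  app : A → A → Option A
  k : A
  s : A
  pairc : A
  pr0 : A
  pr1 : A
  nontrivial : ∃ a b : A, a ≠ b
  k_def : ∀ a : A, (app k a).isSome
  s_def : ∀ a : A, (app s a).isSome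
  s2_def : ∀ a b : A, (oap app (app s a) (some b)).isSome
  k_spec : ∀ a b : A, oap app (app k a) (some b) = some a
  s_spec : ∀ a b c : A, oap app (oap app (app s a) (some b)) (some c)
      = oap app (oap app (some a) (some c)) (oap app (some b) (some c))
  pair_def : ∀ a b : A, (oap app (app pairc a) (some b)).isSome
  pr0_spec : ∀ a b : A, oap app (some pr0) (oap app (app pairc a) (some b)) = some a
  pr1_spec : ∀ a b : A, oap app (some pr1) (oap app (app pairc a) (some b)) = some b
/-- Names in the realizability structure `V_tr(A)`: a name is a pair
`⟨x, x̂⟩` of a set `x` together with a family (the set `x̂ ⊆ A × V_tr(A)`) of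
labelled names. -/
inductive VName (A : Type) : Type 2
  | mk (deg : ZFSet.{0}) (ι : Type 1) (lab : ι → A) (elt : ι → VName A)

/-- The truth component `x°` (first component) of a name. -/
def VName.deg {A : Type} : VName A → ZFSet
  | .mk x _ _ _ => x

/-- The index type of the second component `x*` of a name. -/
def VName.ι {A : Type} : VName A → Type 1
  | .mk _ i _ _ => i

/-- The labels (realizers) of the second component `x*`. -/
def VName.lab {A : Type} : (v : VName A) → v.ι → A
  | .mk _ _ l _ => l

/-- The members of the second component `x*`. -/
def VName.elt {A : Type} : (v : VName A) → v.ι → VName A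
  | .mk _ _ _ e => e

/-- A pair `⟨x, x̂⟩` is a genuine member of `V_tr(A)` when, hereditarily,
`u° ∈ x` for every `⟨a,u⟩ ∈ x̂`. -/
def VName.IsName {A : Type} : VName A → Prop
  | .mk x _ _ e => (∀ i, (e i).deg ∈ x) ∧ ∀ i, (e i).IsName
mutual
/-- Atomic realizability with truth for equality: `a ⊩ x = y` iff `x° = y°`,
every `⟨b,z⟩ ∈ x*` yields `(a·b)₀ ⊩ z ∈ y`, and every `⟨b,z⟩ ∈ y*` yields
`(a·b)₁ ⊩ z ∈ x`.  (The witnessing applications are given by the functions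
`bf, cf, bg, cg`.) -/
inductive RealEq {A : Type} (P : PCA A) : A → VName A → VName A → Prop
  | intro (a : A) (x y : VName A)
      (bf cf : x.ι → A) (bg cg : y.ι → A) :
      x.deg = y.deg →
      (∀ i : x.ι, P.app a (x.lab i) = some (bf i)) →
      (∀ i : x.ι, P.app P.pr0 (bf i) = some (cf i)) →
      (∀ i : x.ι, RealMem P (cf i) (x.elt i) y) →
      (∀ j : y.ι, P.app a (y.lab j) = some (bg j)) →
      (∀ j : y.ι, P.app P.pr1 (bg j) = some (cg j)) →
      (∀ j : y.ι, RealMem P (cg j) (y.elt j) x) →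
      RealEq P a x y

/-- Atomic realizability with truth for membership: `a ⊩ x ∈ y` iff
`x° ∈ y°` and there is `⟨a₀,z⟩ ∈ y*` with `a₁ ⊩ x = z`. -/
inductive RealMem {A : Type} (P : PCA A) : A → VName A → VName A → Prop
  | intro (a : A) (x y : VName A) (j : y.ι) (c : A) :
      x.deg ∈ y.deg →
      P.app P.pr0 a = some (y.lab j) →
      P.app P.pr1 a = some c →
      RealEq P c x (y.elt j) →
      RealMem P a x y
end
/-- A pca over `ω`: a pca with numerals and successor, predecessor and
definition-by-cases combinators. -/
structure PCAw (A : Type) extends PCA A where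
  num : ℕ → A
  succ : A
  pred : A
  d : A
  succ_spec : ∀ n : ℕ, app succ (num n) = some (num (n + 1))
  pred_spec : ∀ n : ℕ, app pred (num (n + 1)) = some (num n)
  d_spec : ∀ (n m : ℕ) (a b : A),
    oap app (oap app (oap app (app d (num n)) (some (num m))) (some a)) (some b)
      = some (if n = m then a else b)
/-- Formulas of set theory (with parameters given by an environment of names),
in de Bruijn style: bounded and unbounded quantifiers are separate. -/
inductive Fml : Type
  | mem (i j : ℕ)
  | eq (i j : ℕ)
  | and (φ ψ : Fml)
  | or (φ ψ : Fml)
  | imp (φ ψ : Fml)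
  | neg (φ : Fml)
  | ball (j : ℕ) (φ : Fml)
  | bex (j : ℕ) (φ : Fml)
  | all (φ : Fml)
  | ex (φ : Fml)

/-- Extend an environment with a new value for variable `0`. -/
def consEnv {α : Type u} (x : α) (ρ : ℕ → α) : ℕ → α
  | 0 => x
  | n + 1 => ρ n

/-- Classical truth of a formula in the universe of sets. -/
def Truth : Fml → (ℕ → ZFSet) → Prop
  | .mem i j, ρ => ρ i ∈ ρ j
  | .eq i j, ρ => ρ i = ρ j
  | .and φ ψ, ρ => Truth φ ρ ∧ Truth ψ ρ
  | .or φ ψ, ρ => Truth φ ρ ∨ Truth ψ ρ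
  | .imp φ ψ, ρ => Truth φ ρ → Truth ψ ρ
  | .neg φ, ρ => ¬ Truth φ ρ
  | .ball j φ, ρ => ∀ x ∈ ρ j, Truth φ (consEnv x ρ)
  | .bex j φ, ρ => ∃ x ∈ ρ j, Truth φ (consEnv x ρ)
  | .all φ, ρ => ∀ x : ZFSet, Truth φ (consEnv x ρ)
  | .ex φ, ρ => ∃ x : ZFSet, Truth φ (consEnv x ρ)

/-- The formula `φ°` obtained by passing to truth components. -/
def degEnv {A : Type} (ρ : ℕ → VName A) : ℕ → ZFSet := fun i => (ρ i).deg

/-- Generic realizability with truth `a ⊩ φ` over `V_tr(A)`. -/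
def RealF {A : Type} (P : PCAw A) : A → Fml → (ℕ → VName A) → Prop
  | a, .mem i j, ρ => RealMem P.toPCA a (ρ i) (ρ j)
  | a, .eq i j, ρ => RealEq P.toPCA a (ρ i) (ρ j)
  | a, .and φ ψ, ρ =>
      (∃ c, P.app P.pr0 a = some c ∧ RealF P c φ ρ) ∧
      (∃ c, P.app P.pr1 a = some c ∧ RealF P c ψ ρ)
  | a, .or φ ψ, ρ =>
      (P.app P.pr0 a = some (P.num 0) ∧
        ∃ c, P.app P.pr1 a = some c ∧ RealF P c φ ρ) ∨
      (P.app P.pr0 a = some (P.num 1) ∧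
        ∃ c, P.app P.pr1 a = some c ∧ RealF P c ψ ρ)
  | a, .imp φ ψ, ρ =>
      (Truth φ (degEnv ρ) → Truth ψ (degEnv ρ)) ∧
      ∀ b, RealF P b φ ρ → ∃ c, P.app a b = some c ∧ RealF P c ψ ρ
  | a, .neg φ, ρ =>
      ¬ Truth φ (degEnv ρ) ∧ ∀ b, ¬ RealF P b φ ρ
  | a, .ball j φ, ρ =>
      (∀ x ∈ (ρ j).deg, Truth φ (consEnv x (degEnv ρ))) ∧
      ∀ i : (ρ j).ι, ∃ c, P.app a ((ρ j).lab i) = some c ∧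
        RealF P c φ (consEnv ((ρ j).elt i) ρ)
  | a, .bex j φ, ρ =>
      ∃ i : (ρ j).ι, P.app P.pr0 a = some ((ρ j).lab i) ∧
        ∃ c, P.app P.pr1 a = some c ∧ RealF P c φ (consEnv ((ρ j).elt i) ρ)
  | a, .all φ, ρ => ∀ u : VName A, u.IsName → RealF P a φ (consEnv u ρ)
  | a, .ex φ, ρ => ∃ u : VName A, u.IsName ∧ RealF P a φ (consEnv u ρ)

/-- The name `⟨x, ∅⟩`, which lies in `V_tr(A)` vacuously; it replaces the canonical name `x̌`
of the paper, since only `x̌° = x` is needed. -/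
def VName.ofSet {A : Type} (x : ZFSet) : VName A :=
  .mk x PEmpty PEmpty.elim PEmpty.elim

@[simp]
lemma VName.deg_ofSet {A : Type} (x : ZFSet) : (VName.ofSet x : VName A).deg = x := rfl

lemma VName.isName_ofSet {A : Type} (x : ZFSet) : (VName.ofSet x : VName A).IsName :=
  ⟨fun i => i.elim, fun i => i.elim⟩

lemma VName.IsName.deg_elt_mem {A : Type} {v : VName A} (h : v.IsName) (i : v.ι) :
    (v.elt i).deg ∈ v.deg := by
  cases v; exact h.1 i

lemma VName.IsName.elt {A : Type} {v : VName A} (h : v.IsName) (i : v.ι) :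
    (v.elt i).IsName := by
  cases v; exact h.2 i

lemma isName_consEnv {A : Type} {u : VName A} {ρ : ℕ → VName A}
    (hu : u.IsName) (hρ : ∀ i, (ρ i).IsName) : ∀ i, (consEnv u ρ i).IsName
  | 0 => hu
  | n + 1 => hρ n

@[simp]
lemma degEnv_consEnv {A : Type} (u : VName A) (ρ : ℕ → VName A) :
    degEnv (consEnv u ρ) = consEnv u.deg (degEnv ρ) := by
  funext i; cases i <;> rfl

/-- Realized formulas are true: if `a ⊩ φ` (with parameters in `V_tr(A)`) then
`φ°` holds, where `φ°` replaces each parameter `x` by `x°`. -/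
theorem truth_lemma {A : Type} (P : PCAw A) (φ : Fml) (ρ : ℕ → VName A)
    (hρ : ∀ i, (ρ i).IsName) (a : A) (h : RealF P a φ ρ) :
    Truth φ (degEnv ρ) := by
  induction φ generalizing ρ a with
  | mem i j => cases h; assumption
  | eq i j => cases h; assumption
  | and φ ψ ihφ ihψ =>
    obtain ⟨⟨b, -, hb⟩, ⟨c, -, hc⟩⟩ := h
    exact ⟨ihφ ρ hρ b hb, ihψ ρ hρ c hc⟩
  | or φ ψ ihφ ihψ =>
    rcases h with ⟨-, c, -, hc⟩ | ⟨-, c, -, hc⟩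
    · exact .inl (ihφ ρ hρ c hc)
    · exact .inr (ihψ ρ hρ c hc)
  | imp φ ψ _ _ => exact h.1
  | neg φ _ => exact h.1
  | ball j φ _ => exact h.1
  | bex j φ ih =>
    obtain ⟨i, -, c, -, hc⟩ := h
    have hu := (hρ j).elt i
    refine ⟨((ρ j).elt i).deg, (hρ j).deg_elt_mem i, ?_⟩
    simpa using ih _ (isName_consEnv hu hρ) c hc
  | all φ ih =>
    intro x
    have hu := VName.isName_ofSet (A := A) x
    simpa using ih _ (isName_consEnv hu hρ) a (h _ hu)
  | ex φ ih =>
    obtain ⟨u, hu, hr⟩ := h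
    exact ⟨u.deg, by simpa using ih _ (isName_consEnv hu hρ) a hr⟩
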